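/- Let 𝔐 = (V,⟨·,·⟩,A) be Jacobi–Tsankov with dim V ≤ 13. Then 𝔐 is 2-step Jacobi nilpotent, i.e. J(x)∘J(y) = 0 for all x, y ∈ V. -/
import Mathlib

noncomputable section

/-- The Jacobi operator `J(x) : y ↦ 𝒜(y,x)x` of a (tri)linear curvature operator `𝒜`. -/
def jacobiOp {V : Type*} [AddCommGroup V] [Module ℝ V]
    (Aop : V →ₗ[ℝ] V →ₗ[ℝ] V →ₗ[ℝ] V) (x : V) : V →ₗ[ℝ] V where
  toFun y := Aop y x x
  map_add' y z := by simp
  map_smul' c y := by simp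

/-- The polarized Jacobi operator `J(x,y) : z ↦ ½(𝒜(z,x)y + 𝒜(z,y)x)`. -/
def jacobiPol {V : Type*} [AddCommGroup V] [Module ℝ V]
    (Aop : V →ₗ[ℝ] V →ₗ[ℝ] V →ₗ[ℝ] V) (x y : V) : V →ₗ[ℝ] V where
  toFun z := (1/2 : ℝ) • (Aop z x y + Aop z y x)
  map_add' a b := by simp [smul_add]; abel
  map_smul' c a := by simp [smul_add, smul_comm c]

section JTaux

variable {V : Type*} [AddCommGroup V] [Module ℝ V]
variable (Aop : V →ₗ[ℝ] V →ₗ[ℝ] V →ₗ[ℝ] V)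

local notation "J" => jacobiOp Aop
local notation "Jp" => jacobiPol Aop

lemma jac_apply (x z : V) : J x z = Aop z x x := rfl

lemma pol_apply (x y z : V) : Jp x y z = (1/2 : ℝ) • (Aop z x y + Aop z y x) := rfl

lemma pol_symm (x y z : V) : Jp x y z = Jp y x z := by
  rw [pol_apply, pol_apply, add_comm]

lemma pol_self (x z : V) : Jp x x z = J x z := by
  rw [pol_apply, jac_apply, ← two_smul ℝ, smul_smul]
  norm_num

lemma jac_add (x y z : V) : J (x + y) z = J x z + J y z + (2:ℝ) • Jp x y z := by
  simp only [jac_apply, pol_apply, map_add, LinearMap.add_apply, smul_add, smul_smul]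
  norm_num
  abel

lemma jac_neg (x z : V) : J (-x) z = J x z := by
  simp only [jac_apply, map_neg, LinearMap.neg_apply, neg_neg]

lemma pol_negr (x y z : V) : Jp x (-y) z = -(Jp x y z) := by
  simp only [pol_apply, map_neg, LinearMap.neg_apply, smul_add, smul_neg, neg_add]

lemma pol_addl (x y w z : V) : Jp (x + y) w z = Jp x w z + Jp y w z := by
  simp only [pol_apply, map_add, LinearMap.add_apply, smul_add]
  abel

lemma pol_negl (x w z : V) : Jp (-x) w z = -(Jp x w z) := by
  rw [pol_symm, pol_negr, pol_symm]

lemma half_cancel {v w : V} (h : (2:ℝ) • v = (2:ℝ) • w) : v = w := by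
  have h2 := congrArg (fun t => ((1/2) : ℝ) • t) h
  simp only [smul_smul] at h2
  norm_num at h2
  exact h2

lemma comm_JJ (hJT : ∀ x y : V, J x ∘ₗ J y = J y ∘ₗ J x) (x y z : V) :
    J x (J y z) = J y (J x z) := by
  simpa using LinearMap.congr_fun (hJT x y) z

lemma comm_JP (hJT : ∀ x y : V, J x ∘ₗ J y = J y ∘ₗ J x) (x y z w : V) :
    J x (jacobiPol Aop y z w) = Jp y z (J x w) := by
  have h := comm_JJ Aop hJT x (y + z) w
  simp only [jac_add, map_add, map_smul] at h
  rw [comm_JJ Aop hJT x y w, comm_JJ Aop hJT x z w] at h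
  exact half_cancel (add_left_cancel h)

lemma comm_PP (hJT : ∀ x y : V, J x ∘ₗ J y = J y ∘ₗ J x) (x y c d w : V) :
    Jp x y (Jp c d w) = Jp c d (Jp x y w) := by
  have h := comm_JP Aop hJT (x + y) c d w
  simp only [jac_add, map_add, map_smul, LinearMap.add_apply] at h
  rw [comm_JP Aop hJT x c d w, comm_JP Aop hJT y c d w] at h
  exact half_cancel (add_left_cancel h)

variable (B : LinearMap.BilinForm ℝ V)

lemma flipA (hA1 : ∀ x y z w : V, B (Aop x y z) w = - B (Aop y x z) w)
    (hA2 : ∀ x y z w : V, B (Aop x y z) w = B (Aop z w x) y)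
    (x y z w : V) : B (Aop x y z) w = - B (Aop x y w) z := by
  rw [hA2 x y z w, hA1 z w x y, hA2 w z x y]

lemma moveJ (hBsymm : ∀ x y : V, B x y = B y x)
    (hA1 : ∀ x y z w : V, B (Aop x y z) w = - B (Aop y x z) w)
    (hA2 : ∀ x y z w : V, B (Aop x y z) w = B (Aop z w x) y)
    (x y z : V) : B (J x y) z = B y (J x z) := by
  rw [jac_apply, jac_apply, hBsymm y]
  rw [hA2 y x x z, hA1 x z y x, flipA Aop B hA1 hA2 z x y x]
  ring

lemma moveP (hBsymm : ∀ x y : V, B x y = B y x)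
    (hA1 : ∀ x y z w : V, B (Aop x y z) w = - B (Aop y x z) w)
    (hA2 : ∀ x y z w : V, B (Aop x y z) w = B (Aop z w x) y)
    (x y z w : V) : B (Jp x y z) w = B z (Jp x y w) := by
  have key : ∀ p q r s : V, B (Aop p q r) s = B (Aop s r q) p := by
    intro p q r s
    rw [hA2 p q r s, hA1 r s p q, flipA Aop B hA1 hA2 s r p q]
    ring
  rw [pol_apply, pol_apply, hBsymm z]
  simp only [map_add, map_smul, LinearMap.add_apply, LinearMap.smul_apply, smul_eq_mul]
  rw [key z x y w, key z y x w]
  ring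

lemma jac_self (hBnd : ∀ x : V, (∀ y : V, B x y = 0) → x = 0)
    (hA1 : ∀ x y z w : V, B (Aop x y z) w = - B (Aop y x z) w) (x : V) :
    J x x = 0 := by
  apply hBnd
  intro w
  have h := hA1 x x x w
  rw [jac_apply]
  linarith

lemma bianchi (hBnd : ∀ x : V, (∀ y : V, B x y = 0) → x = 0)
    (hA3 : ∀ x y z w : V, B (Aop x y z) w + B (Aop y z x) w + B (Aop z x y) w = 0)
    (x y z : V) : Jp x y z + Jp y z x + Jp z x y = 0 := by
  apply hBnd
  intro w
  simp only [pol_apply, map_add, map_smul, LinearMap.add_apply, LinearMap.smul_apply,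
    LinearMap.zero_apply, smul_eq_mul]
  have h1 := hA3 x y z w
  have h2 := hA3 z y x w
  linarith

lemma pol_xyx (hBnd : ∀ x : V, (∀ y : V, B x y = 0) → x = 0)
    (hA3 : ∀ x y z w : V, B (Aop x y z) w + B (Aop y z x) w + B (Aop z x y) w = 0)
    (x y : V) : Jp x y x = (-(1/2) : ℝ) • J x y := by
  have h := bianchi Aop B hBnd hA3 x y x
  rw [pol_symm Aop y x x, pol_self Aop x y] at h
  linear_combination (norm := module) ((1/2) : ℝ) • h

section Polar

variable (hJT : ∀ x y : V, jacobiOp Aop x ∘ₗ jacobiOp Aop y = jacobiOp Aop y ∘ₗ jacobiOp Aop x)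
variable (hBnd : ∀ x : V, (∀ y : V, B x y = 0) → x = 0)
variable (hA1 : ∀ x y z w : V, B (Aop x y z) w = - B (Aop y x z) w)
variable (hA3 : ∀ x y z w : V, B (Aop x y z) w + B (Aop y z x) w + B (Aop z x y) w = 0)

include hJT hBnd hA1 hA3

lemma jjx (x y : V) : J x (J y x) = 0 := by
  rw [comm_JJ Aop hJT, jac_self Aop B hBnd hA1, map_zero]

lemma expandJJ (x y w : V) :
    J x (J y w) + J w (J y x) + (2:ℝ) • Jp x w (J y x) + (2:ℝ) • Jp x w (J y w) = 0 := by
  have h : J (x + w) (J y (x + w)) = 0 := jjx Aop B hJT hBnd hA1 hA3 (x + w) y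
  rw [map_add (J y) x w] at h
  rw [map_add (J (x + w))] at h
  simp only [jac_add] at h
  rw [jjx Aop B hJT hBnd hA1 hA3 x y, jjx Aop B hJT hBnd hA1 hA3 w y] at h
  linear_combination (norm := module) h

lemma I6 (x y w : V) : J x (J y w) = (-2 : ℝ) • Jp x w (J y x) := by
  have h1 := expandJJ Aop B hJT hBnd hA1 hA3 x y w
  have h2 := expandJJ Aop B hJT hBnd hA1 hA3 x y (-w)
  rw [map_neg (J y) w, jac_neg] at h2
  simp only [pol_negr, map_neg, smul_neg, neg_neg, LinearMap.neg_apply] at h2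
  linear_combination (norm := module) ((1/2) : ℝ) • h1 - ((1/2) : ℝ) • h2

lemma I9 (x y z w : V) : J x (Jp y z w) = (-2:ℝ) • Jp x w (Jp y z x) := by
  have h1 := I6 Aop B hJT hBnd hA1 hA3 x (y + z) w
  simp only [jac_add, map_add, map_smul] at h1
  rw [I6 Aop B hJT hBnd hA1 hA3 x y w, I6 Aop B hJT hBnd hA1 hA3 x z w] at h1
  linear_combination (norm := module) ((1/2) : ℝ) • h1

lemma I10 (x y z : V) : J x (Jp y z x) = 0 := by
  have h := I9 Aop B hJT hBnd hA1 hA3 x y z x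
  rw [pol_self] at h
  have h3 : (3:ℝ) • J x (Jp y z x) = 0 := by
    linear_combination (norm := module) h
  have := smul_eq_zero.mp h3
  simpa using this.resolve_left (by norm_num)

lemma I8 (x w z : V) : J x (Jp x w z) = 0 := by
  have hs : J x (Jp x w z) = J x (Jp x z w) := by
    have h := I9 Aop B hJT hBnd hA1 hA3 x x w z
    rw [pol_xyx Aop B hBnd hA3 x w, map_smul] at h
    rw [← comm_JP Aop hJT x x z w] at h
    linear_combination (norm := module) h
  have hb := bianchi Aop B hBnd hA3 x w z
  have h2 : J x (Jp x w z) + J x (Jp w z x) + J x (Jp z x w) = 0 := by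
    have h3 := congrArg (fun t => J x t) hb
    simpa [map_add] using h3
  rw [I10 Aop B hJT hBnd hA1 hA3 x w z, pol_symm Aop z x w, ← hs] at h2
  have h3 : (2:ℝ) • J x (Jp x w z) = 0 := by
    linear_combination (norm := module) h2
  have := smul_eq_zero.mp h3
  simpa using this.resolve_left (by norm_num)

lemma I11 (x s w z : V) : J x (Jp s w z) = (-2:ℝ) • Jp x s (Jp x w z) := by
  have h1 : J x (Jp s w z) + J s (Jp x w z) + (2:ℝ) • Jp x s (Jp x w z)
      + (2:ℝ) • Jp x s (Jp s w z) = 0 := by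
    have h := I8 Aop B hJT hBnd hA1 hA3 (x + s) w z
    rw [pol_addl] at h
    rw [map_add (J (x + s))] at h
    simp only [jac_add] at h
    rw [I8 Aop B hJT hBnd hA1 hA3 x w z, I8 Aop B hJT hBnd hA1 hA3 s w z] at h
    linear_combination (norm := module) h
  have h2 : -(J x (Jp s w z)) + J s (Jp x w z) - (2:ℝ) • Jp x s (Jp x w z)
      + (2:ℝ) • Jp x s (Jp s w z) = 0 := by
    have h := I8 Aop B hJT hBnd hA1 hA3 (x + -s) w z
    rw [pol_addl] at h
    rw [map_add (J (x + -s))] at h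
    simp only [jac_add, jac_neg, pol_negl, pol_negr, map_neg, smul_neg, neg_neg,
      LinearMap.neg_apply] at h
    rw [I8 Aop B hJT hBnd hA1 hA3 x w z, I8 Aop B hJT hBnd hA1 hA3 s w z] at h
    linear_combination (norm := module) h
  linear_combination (norm := module) ((1/2) : ℝ) • h1 - ((1/2) : ℝ) • h2

lemma jjself (x z : V) : J x (J x z) = 0 := by
  have := I8 Aop B hJT hBnd hA1 hA3 x x z
  rwa [pol_self] at this

lemma k6 (x w t : V) : Jp x w (J x t) = 0 := by
  rw [← comm_JP Aop hJT x x w t]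
  exact I8 Aop B hJT hBnd hA1 hA3 x w t

lemma prodPP (x s w z : V) :
    Jp x s (Jp x w z) = (-(1/2) : ℝ) • J x (Jp s w z) := by
  have := I11 Aop B hJT hBnd hA1 hA3 x s w z
  linear_combination (norm := module) ((1/2) : ℝ) • this

lemma hpp (x y z : V) : J x (J y z) = (-2:ℝ) • Jp x y (Jp x y z) := by
  have h := I11 Aop B hJT hBnd hA1 hA3 x y y z
  rwa [pol_self] at h

end Polar

set_option maxHeartbeats 2000000 in
lemma jt_main [FiniteDimensional ℝ V]
    (hBsymm : ∀ x y : V, B x y = B y x)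
    (hBnd : ∀ x : V, (∀ y : V, B x y = 0) → x = 0)
    (hA1 : ∀ x y z w : V, B (Aop x y z) w = - B (Aop y x z) w)
    (hA2 : ∀ x y z w : V, B (Aop x y z) w = B (Aop z w x) y)
    (hA3 : ∀ x y z w : V, B (Aop x y z) w + B (Aop y z x) w + B (Aop z x y) w = 0)
    (hJT : ∀ x y : V, jacobiOp Aop x ∘ₗ jacobiOp Aop y = jacobiOp Aop y ∘ₗ jacobiOp Aop x)
    (hdim : Module.finrank ℝ V ≤ 13) :
    ∀ a b : V, J a ∘ₗ J b = 0 := by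
  intro a b
  by_contra hne
  -- shorthand facts
  have jj : ∀ x y z : V, J x (J y z) = J y (J x z) := comm_JJ Aop hJT
  have jpm : ∀ x y z w : V, J x (Jp y z w) = Jp y z (J x w) := comm_JP Aop hJT
  have jpm' : ∀ y z x w : V, Jp y z (J x w) = J x (Jp y z w) := fun y z x w => (jpm x y z w).symm
  have mvj : ∀ x y z : V, B (J x y) z = B y (J x z) := moveJ Aop B hBsymm hA1 hA2
  have mvp : ∀ x y z w : V, B (Jp x y z) w = B z (Jp x y w) := moveP Aop B hBsymm hA1 hA2
  have jx : ∀ x : V, J x x = 0 := jac_self Aop B hBnd hA1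
  have jyx : ∀ x y : V, J x (J y x) = 0 := jjx Aop B hJT hBnd hA1 hA3
  have jxx : ∀ x z : V, J x (J x z) = 0 := jjself Aop B hJT hBnd hA1 hA3
  have i8 : ∀ x w z : V, J x (Jp x w z) = 0 := I8 Aop B hJT hBnd hA1 hA3
  have psym : ∀ x y z : V, Jp x y z = Jp y x z := pol_symm Aop
  have pslf : ∀ x z : V, Jp x x z = J x z := pol_self Aop
  have i8b : ∀ x w z : V, J x (Jp w x z) = 0 := fun x w z => by
    rw [psym w x z]; exact i8 x w z
  have i10 : ∀ x y z : V, J x (Jp y z x) = 0 := I10 Aop B hJT hBnd hA1 hA3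
  have pxyx : ∀ x y : V, Jp x y x = (-(1/2) : ℝ) • J x y := pol_xyx Aop B hBnd hA3
  have pxyy : ∀ x y : V, Jp x y y = (-(1/2) : ℝ) • J y x := fun x y => by
    rw [psym x y y]; exact pxyx y x
  have ppp : ∀ x s w z : V, Jp x s (Jp x w z) = (-(1/2) : ℝ) • J x (Jp s w z) :=
    prodPP Aop B hJT hBnd hA1 hA3
  have hPP : ∀ x y z : V, J x (J y z) = (-2:ℝ) • Jp x y (Jp x y z) := hpp Aop B hJT hBnd hA1 hA3
  have W3 : ∀ x y z : V, J x (J y (J z x)) = 0 := fun x y z => by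
    rw [jj x y (J z x), jyx x z, map_zero]
  have W4 : ∀ x y t : V, J x (J y (J x t)) = 0 := fun x y t => by
    rw [jj x y (J x t), jxx x t, map_zero]
  have W5 : ∀ x y z t : V, J x (J y (J z (J x t))) = 0 := fun x y z t => by
    rw [jj x y (J z (J x t)), W4 x z t, map_zero]
  have Bxx : ∀ x w : V, B x (J x w) = 0 := fun x w => by
    rw [← mvj x x w, jx x]
    exact LinearMap.map_zero₂ B w
  have BW1 : ∀ x y z : V, B x (J y (J x z)) = 0 := fun x y z => by
    rw [← mvj y x (J x z), ← mvj x (J y x) z, jyx x y]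
    exact LinearMap.map_zero₂ B z
  -- produce the vector u with B (P u) (P u) ≠ 0 where P = Jp a b
  obtain ⟨u₀, hu₀⟩ : ∃ w : V, J a (J b w) ≠ 0 := by
    by_contra hcon
    push_neg at hcon
    exact hne (by ext w; simpa using hcon w)
  have hP2 : Jp a b (Jp a b u₀) ≠ 0 := by
    intro h
    exact hu₀ (by rw [hPP a b u₀, h, smul_zero])
  obtain ⟨v, hv⟩ : ∃ v : V, B (Jp a b (Jp a b u₀)) v ≠ 0 := by
    by_contra hcon
    push_neg at hcon
    exact hP2 (hBnd _ hcon)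
  rw [mvp a b (Jp a b u₀) v] at hv
  obtain ⟨u, hu⟩ : ∃ u : V, B (Jp a b u) (Jp a b u) ≠ 0 := by
    by_cases h1 : B (Jp a b u₀) (Jp a b u₀) = 0
    · by_cases h2 : B (Jp a b v) (Jp a b v) = 0
      · refine ⟨u₀ + v, fun hzero => hv ?_⟩
        rw [map_add] at hzero
        simp only [map_add, LinearMap.add_apply] at hzero
        have hsy := hBsymm (Jp a b v) (Jp a b u₀)
        linarith
      · exact ⟨v, h2⟩
    · exact ⟨u₀, h1⟩
  set β := B (Jp a b u) (Jp a b u) with hβdef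
  -- Bianchi decomposition of (Jp a b) u
  have hPu : Jp a b u = -(Jp b u a) + -(Jp a u b) := by
    have h := bianchi Aop B hBnd hA3 a b u
    rw [psym u a b] at h
    linear_combination (norm := module) h
  -- values of the Gram matrix on the Jp-block
  have w77 : B (Jp b u a) (Jp b u a) = -(1/2) * B (J b (J u a)) a := by
    rw [mvp b u a (Jp b u a), psym b u a, psym b u (Jp u b a), ppp u b b a, pslf b a,
      map_smul, jj u b a, smul_eq_mul, hBsymm a (J b (J u a))]
  have w88 : B (Jp a u b) (Jp a u b) = -(1/2) * B (J a (J u b)) b := by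
    rw [mvp a u b (Jp a u b), psym a u b, psym a u (Jp u a b), ppp u a a b, pslf a b,
      map_smul, jj u a b, smul_eq_mul, hBsymm b (J a (J u b))]
  have w78a : B (Jp b u a) (Jp a u b) = (1/4) * B (J b (J u a)) a := by
    rw [mvp b u a (Jp a u b), psym a u b, psym b u (Jp u a b), ppp u b a b, pxyx b a]
    simp only [map_smul, smul_smul, smul_eq_mul]
    rw [jj u b a, hBsymm a (J b (J u a))]
    ring
  have w78b : B (Jp b u a) (Jp a u b) = (1/4) * B (J a (J u b)) b := by
    rw [← mvp a u (Jp b u a) b, psym b u a, psym a u (Jp u b a), ppp u a b a, pxyx a b]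
    simp only [map_smul, LinearMap.smul_apply, smul_smul, smul_eq_mul]
    rw [jj u a b]
    ring
  have hXY : B (J b (J u a)) a = B (J a (J u b)) b := by linarith
  have hb2 : β = -(1/2) * B (J b (J u a)) a := by
    rw [hβdef, hPu]
    simp only [map_add, map_neg, LinearMap.add_apply, LinearMap.neg_apply, neg_neg]
    rw [hBsymm (Jp a u b) (Jp b u a), w77, w88, w78a, ← hXY]
    ring
  have valB : B (J b (J u a)) a = -2 * β := by linarith
  have valC : B (J a (J u b)) b = -2 * β := by linarith
  have valw77 : B (Jp b u a) (Jp b u a) = β := by rw [w77, valB]; ring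
  have valw88 : B (Jp a u b) (Jp a u b) = β := by rw [w88, valC]; ring
  have valw78 : B (Jp b u a) (Jp a u b) = -(1/2) * β := by rw [w78a, valB]; ring
  have valw87 : B (Jp a u b) (Jp b u a) = -(1/2) * β := by
    rw [hBsymm (Jp a u b) (Jp b u a)]; exact valw78
  have valA : B (J a (J b u)) u = -2 * β := by
    rw [hPP a b u, map_smul, LinearMap.smul_apply, smul_eq_mul, mvp a b (Jp a b u) u, ← hβdef]
  have valD : B (J b u) (J a u) = -2 * β := by
    rw [← mvj a (J b u) u]; exact valA
  have valE : B (J a u) (J b u) = -2 * β := by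
    rw [mvj a u (J b u), hBsymm u (J a (J b u))]; exact valA
  have valF : B (J u a) (J b a) = -2 * β := by
    rw [mvj u a (J b a), jj u b a, hBsymm a (J b (J u a))]; exact valB
  have valG : B (J b a) (J u a) = -2 * β := by
    rw [mvj b a (J u a), hBsymm a (J b (J u a))]; exact valB
  have valH : B (J u b) (J a b) = -2 * β := by
    rw [mvj u b (J a b), jj u a b, hBsymm b (J a (J u b))]; exact valC
  have valI : B (J a b) (J u b) = -2 * β := by
    rw [mvj a b (J u b), hBsymm b (J a (J u b))]; exact valC
  have valL : B u (J a (J b u)) = -2 * β := by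
    rw [hBsymm u (J a (J b u))]; exact valA
  have valM : B a (J b (J u a)) = -2 * β := by
    rw [hBsymm a (J b (J u a))]; exact valB
  have valN : B b (J a (J u b)) = -2 * β := by
    rw [hBsymm b (J a (J u b))]; exact valC
  have hsolve : ∀ r : ℝ, r * (-2 * β) = 0 → r = 0 := by
    intro r hr
    rcases mul_eq_zero.mp hr with h | h
    · exact h
    · exact absurd (by linarith : β = 0) hu
  -- the fourteen vectors are linearly independent
  have hli : LinearIndependent ℝ
      ![u, a, b, J a u, J b u, J b a, J u a, J a b, J u b,
        Jp b u a, Jp a u b, J a (J b u), J b (J u a), J a (J u b)] := by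
    rw [Fintype.linearIndependent_iff]
    intro g hg
    simp only [Fin.sum_univ_succ, Fin.sum_univ_zero, Matrix.cons_val_zero, Matrix.cons_val_succ,
      add_zero] at hg
    have hg' : g 0 • u + (g 1 • a + (g 2 • b + (g 3 • J a u + (g 4 • J b u + (g 5 • J b a +
        (g 6 • J u a + (g 7 • J a b + (g 8 • J u b + (g 9 • Jp b u a + (g 10 • Jp a u b +
        (g 11 • J a (J b u) + (g 12 • J b (J u a) + g 13 • J a (J u b))))))))))))) = 0 := hg
    clear hg
    have hg0 : g 0 = 0 := by
      have s := congrArg (fun t => B (J a (J b u)) t) hg'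
      simp only [map_add, map_smul, smul_eq_mul, map_zero] at s
      rw [valA] at s
      simp only [mvj, mvp, jpm', i8, i8b, i10, pxyx, pxyy, jyx, jxx, jx, W3, W4, W5, Bxx, BW1,
        map_zero, map_smul, smul_zero, smul_eq_mul, mul_zero, zero_mul, add_zero, zero_add] at s
      exact hsolve _ s
    have hg1 : g 1 = 0 := by
      have s := congrArg (fun t => B (J b (J u a)) t) hg'
      simp only [map_add, map_smul, smul_eq_mul, map_zero] at s
      rw [valB] at s
      simp only [hg0, mvj, mvp, jpm', i8, i8b, i10, pxyx, pxyy, jyx, jxx, jx, W3, W4, W5, Bxx, BW1,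
        map_zero, map_smul, smul_zero, smul_eq_mul, mul_zero, zero_mul, add_zero, zero_add] at s
      exact hsolve _ s
    have hg2 : g 2 = 0 := by
      have s := congrArg (fun t => B (J a (J u b)) t) hg'
      simp only [map_add, map_smul, smul_eq_mul, map_zero] at s
      rw [valC] at s
      simp only [hg0, hg1, mvj, mvp, jpm', i8, i8b, i10, pxyx, pxyy, jyx, jxx, jx, W3, W4, W5,
        Bxx, BW1, map_zero, map_smul, smul_zero, smul_eq_mul, mul_zero, zero_mul, add_zero,
        zero_add] at s
      exact hsolve _ s
    have hg3 : g 3 = 0 := by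
      have s := congrArg (fun t => B (J b u) t) hg'
      simp only [map_add, map_smul, smul_eq_mul, map_zero] at s
      rw [valD] at s
      simp only [hg0, hg1, hg2, mvj, mvp, jpm', i8, i8b, i10, pxyx, pxyy, jyx, jxx, jx, W3, W4, W5,
        Bxx, BW1, map_zero, map_smul, smul_zero, smul_eq_mul, mul_zero, zero_mul, add_zero,
        zero_add] at s
      exact hsolve _ s
    have hg4 : g 4 = 0 := by
      have s := congrArg (fun t => B (J a u) t) hg'
      simp only [map_add, map_smul, smul_eq_mul, map_zero] at s
      rw [valE] at s
      simp only [hg0, hg1, hg2, hg3, mvj, mvp, jpm', i8, i8b, i10, pxyx, pxyy, jyx, jxx, jx, W3,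
        W4, W5, Bxx, BW1, map_zero, map_smul, smul_zero, smul_eq_mul, mul_zero, zero_mul, add_zero,
        zero_add] at s
      exact hsolve _ s
    have hg5 : g 5 = 0 := by
      have s := congrArg (fun t => B (J u a) t) hg'
      simp only [map_add, map_smul, smul_eq_mul, map_zero] at s
      rw [valF] at s
      simp only [hg0, hg1, hg2, hg3, hg4, mvj, mvp, jpm', i8, i8b, i10, pxyx, pxyy, jyx, jxx, jx,
        W3, W4, W5, Bxx, BW1, map_zero, map_smul, smul_zero, smul_eq_mul, mul_zero, zero_mul,
        add_zero, zero_add] at s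
      exact hsolve _ s
    have hg6 : g 6 = 0 := by
      have s := congrArg (fun t => B (J b a) t) hg'
      simp only [map_add, map_smul, smul_eq_mul, map_zero] at s
      rw [valG] at s
      simp only [hg0, hg1, hg2, hg3, hg4, hg5, mvj, mvp, jpm', i8, i8b, i10, pxyx, pxyy, jyx, jxx,
        jx, W3, W4, W5, Bxx, BW1, map_zero, map_smul, smul_zero, smul_eq_mul, mul_zero, zero_mul,
        add_zero, zero_add] at s
      exact hsolve _ s
    have hg7 : g 7 = 0 := by
      have s := congrArg (fun t => B (J u b) t) hg'
      simp only [map_add, map_smul, smul_eq_mul, map_zero] at s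
      rw [valH] at s
      simp only [hg0, hg1, hg2, hg3, hg4, hg5, hg6, mvj, mvp, jpm', i8, i8b, i10, pxyx, pxyy, jyx,
        jxx, jx, W3, W4, W5, Bxx, BW1, map_zero, map_smul, smul_zero, smul_eq_mul, mul_zero,
        zero_mul, add_zero, zero_add] at s
      exact hsolve _ s
    have hg8 : g 8 = 0 := by
      have s := congrArg (fun t => B (J a b) t) hg'
      simp only [map_add, map_smul, smul_eq_mul, map_zero] at s
      rw [valI] at s
      simp only [hg0, hg1, hg2, hg3, hg4, hg5, hg6, hg7, mvj, mvp, jpm', i8, i8b, i10, pxyx, pxyy,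
        jyx, jxx, jx, W3, W4, W5, Bxx, BW1, map_zero, map_smul, smul_zero, smul_eq_mul, mul_zero,
        zero_mul, add_zero, zero_add] at s
      exact hsolve _ s
    obtain ⟨hg9, hg10⟩ : g 9 = 0 ∧ g 10 = 0 := by
      have sJ := congrArg (fun t => B (Jp b u a) t) hg'
      simp only [map_add, map_smul, smul_eq_mul, map_zero] at sJ
      rw [valw77, valw78] at sJ
      simp only [hg0, hg1, hg2, hg3, hg4, hg5, hg6, hg7, hg8, mvj, mvp, jpm', i8, i8b, i10, pxyx,
        pxyy, jyx, jxx, jx, W3, W4, W5, Bxx, BW1, map_zero, map_smul, smul_zero, smul_eq_mul,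
        mul_zero, zero_mul, add_zero, zero_add] at sJ
      have sK := congrArg (fun t => B (Jp a u b) t) hg'
      simp only [map_add, map_smul, smul_eq_mul, map_zero] at sK
      rw [valw87, valw88] at sK
      simp only [hg0, hg1, hg2, hg3, hg4, hg5, hg6, hg7, hg8, mvj, mvp, jpm', i8, i8b, i10, pxyx,
        pxyy, jyx, jxx, jx, W3, W4, W5, Bxx, BW1, map_zero, map_smul, smul_zero, smul_eq_mul,
        mul_zero, zero_mul, add_zero, zero_add] at sK
      have t1 : (g 9 - (1/2) * g 10) * β = 0 := by linear_combination sJ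
      have t2 : (g 10 - (1/2) * g 9) * β = 0 := by linear_combination sK
      have z1 := (mul_eq_zero.mp t1).resolve_right hu
      have z2 := (mul_eq_zero.mp t2).resolve_right hu
      constructor <;> linarith
    have hg11 : g 11 = 0 := by
      have s := congrArg (fun t => B u t) hg'
      simp only [map_add, map_smul, smul_eq_mul, map_zero] at s
      rw [valL] at s
      simp only [hg0, hg1, hg2, hg3, hg4, hg5, hg6, hg7, hg8, hg9, hg10, mvj, mvp, jpm', i8, i8b,
        i10, pxyx, pxyy, jyx, jxx, jx, W3, W4, W5, Bxx, BW1, map_zero, map_smul, smul_zero,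
        smul_eq_mul, mul_zero, zero_mul, add_zero, zero_add] at s
      exact hsolve _ s
    have hg12 : g 12 = 0 := by
      have s := congrArg (fun t => B a t) hg'
      simp only [map_add, map_smul, smul_eq_mul, map_zero] at s
      rw [valM] at s
      simp only [hg0, hg1, hg2, hg3, hg4, hg5, hg6, hg7, hg8, hg9, hg10, hg11, mvj, mvp, jpm', i8,
        i8b, i10, pxyx, pxyy, jyx, jxx, jx, W3, W4, W5, Bxx, BW1, map_zero, map_smul, smul_zero,
        smul_eq_mul, mul_zero, zero_mul, add_zero, zero_add] at s
      exact hsolve _ s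
    have hg13 : g 13 = 0 := by
      have s := congrArg (fun t => B b t) hg'
      simp only [map_add, map_smul, smul_eq_mul, map_zero] at s
      rw [valN] at s
      simp only [hg0, hg1, hg2, hg3, hg4, hg5, hg6, hg7, hg8, hg9, hg10, hg11, hg12, mvj, mvp,
        jpm', i8, i8b, i10, pxyx, pxyy, jyx, jxx, jx, W3, W4, W5, Bxx, BW1, map_zero, map_smul,
        smul_zero, smul_eq_mul, mul_zero, zero_mul, add_zero, zero_add] at s
      exact hsolve _ s
    intro i
    fin_cases i <;> assumption
  have hcard := hli.fintype_card_le_finrank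
  rw [Fintype.card_fin] at hcard
  omega

end JTaux

/-- A Jacobi–Tsankov `𝔐 = (V,⟨·,·⟩,A)` with `dim V ≤ 13` is 2-step
Jacobi nilpotent. -/
theorem jacobiTsankov_low_dim_two_step_nilpotent
    {V : Type*} [AddCommGroup V] [Module ℝ V] [FiniteDimensional ℝ V]
    -- a nondegenerate symmetric bilinear form ⟨·,·⟩ on V
    (B : LinearMap.BilinForm ℝ V)
    (hBsymm : ∀ x y : V, B x y = B y x)
    (hBnd : ∀ x : V, (∀ y : V, B x y = 0) → x = 0)
    -- the curvature operator 𝒜, with `A x y z w = ⟨𝒜(x,y)z, w⟩`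
    (Aop : V →ₗ[ℝ] V →ₗ[ℝ] V →ₗ[ℝ] V)
    -- A(x,y,z,w) = -A(y,x,z,w)
    (hA1 : ∀ x y z w : V, B (Aop x y z) w = - B (Aop y x z) w)
    -- A(x,y,z,w) = A(z,w,x,y)
    (hA2 : ∀ x y z w : V, B (Aop x y z) w = B (Aop z w x) y)
    -- first Bianchi identity
    (hA3 : ∀ x y z w : V, B (Aop x y z) w + B (Aop y z x) w + B (Aop z x y) w = 0)
    -- 𝔐 is Jacobi–Tsankov
    (hJT : ∀ x y : V, jacobiOp Aop x ∘ₗ jacobiOp Aop y = jacobiOp Aop y ∘ₗ jacobiOp Aop x)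
    (hdim : Module.finrank ℝ V ≤ 13) :
    ∀ x y : V, jacobiOp Aop x ∘ₗ jacobiOp Aop y = 0 := by
  exact jt_main Aop B hBsymm hBnd hA1 hA2 hA3 hJT hdim
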